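/- arXiv:1910.09755 — 2 statements merged into one kernel-verified Lean document; each statement's English description precedes it below -/
import Mathlib

section
/- Let s ≥ 0 be a real number and (k_n) a sequence of natural numbers with k_n ≤ n. Suppose there exists δ > 0 such that for all sufficiently large n, s ≥ (1/n)·log₂(#F(n, k_n)) + δ. Then the probability that the random 1-CARD-XOR formula ψ(n, k_n, ⌈s·n⌉) is unsatisfiable tends to 1 as n → ∞. -/
open Finset Filter
open scoped Classical

/-- Probability of event `P` over a uniformly random pair `(A, b)` with `A` an
`m × n` matrix over `ZMod 2` and `b : Fin m → ZMod 2`. -/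
noncomputable def xorProb (n m : ℕ)
    (P : Matrix (Fin m) (Fin n) (ZMod 2) × (Fin m → ZMod 2) → Prop) : ℝ :=
  (Finset.univ.filter P).card /
    Fintype.card (Matrix (Fin m) (Fin n) (ZMod 2) × (Fin m → ZMod 2))

/-- The random 1-CARD-XOR formula `ψ(n,k,m)` is satisfied by the pair `(A, b)`:
there is an assignment of Hamming weight at most `k` solving `A ⬝ x = b`. -/
def cardXorSat (n k m : ℕ)
    (ab : Matrix (Fin m) (Fin n) (ZMod 2) × (Fin m → ZMod 2)) : Prop :=
  ∃ x : Fin n → ZMod 2, hammingNorm x ≤ k ∧ ab.1.mulVec x = ab.2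

/-- Probability that `ψ(n,k,m)` is satisfiable. -/
noncomputable def satProb (n k m : ℕ) : ℝ := xorProb n m (cardXorSat n k m)

/-- Probability that `ψ(n,k,m)` is unsatisfiable. -/
noncomputable def unsatProb (n k m : ℕ) : ℝ := xorProb n m fun ab => ¬ cardXorSat n k m ab

/-- `#F(n,k) = ∑_{w=0}^{k} C(n,w)`, the number of solutions of the at-most-`k`
cardinality constraint on `n` variables. -/
def cardSum (n k : ℕ) : ℕ := ∑ w ∈ Finset.range (k + 1), n.choose w

/-- The binary entropy function (with `H 0 = H 1 = 0` by `logb` junk values). -/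
noncomputable def binEnt (μ : ℝ) : ℝ :=
  -μ * Real.logb 2 μ - (1 - μ) * Real.logb 2 (1 - μ)

/-!
First-moment bound: each of the `#F(n,k)` assignments of weight at most `k` solves `A x = b`
for exactly a `2⁻ᵐ` fraction of the pairs `(A, b)`, so `ψ(n,k,m)` is satisfiable with
probability at most `#F(n,k) / 2 ^ m`. With `m = ⌈s n⌉` and `log₂ #F(n,k_n) ≤ (s - δ) n`
this is at most `2 ^ (-δ n)`.
-/

def funZModTwoEquivFinset (ι : Type*) [Fintype ι] [DecidableEq ι] :
    (ι → ZMod 2) ≃ Finset ι where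
  toFun x := {i | x i ≠ 0}
  invFun t i := if i ∈ t then 1 else 0
  left_inv x := by
    funext i
    simp only [mem_filter, mem_univ, true_and]
    generalize x i = a
    revert a
    decide
  right_inv t := by ext i; by_cases hi : i ∈ t <;> simp [hi]

lemma card_filter_card_le_eq_sum_choose (ι : Type*) [Fintype ι] (K : ℕ) :
    #{t : Finset ι | #t ≤ K} = ∑ w ∈ range (K + 1), (Fintype.card ι).choose w := by
  rw [card_eq_sum_card_fiberwise (f := Finset.card) (t := range (K + 1))
    (fun t ht => by simpa [Nat.lt_succ_iff] using ht)]
  refine sum_congr rfl fun w hw => ?_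
  rw [← card_univ, ← card_powersetCard]
  congr 1
  ext t
  simp only [mem_filter, mem_univ, true_and, mem_powersetCard, subset_univ]
  have := mem_range.1 hw
  omega

lemma card_filter_hammingNorm_le (n K : ℕ) :
    #{x : Fin n → ZMod 2 | hammingNorm x ≤ K} = cardSum n K := by
  rw [card_equiv (funZModTwoEquivFinset (Fin n)) (t := {t | #t ≤ K})
      (fun x => by simp [funZModTwoEquivFinset, hammingNorm]),
    card_filter_card_le_eq_sum_choose, Fintype.card_fin, cardSum]

lemma card_xorSystems (n m : ℕ) :
    Fintype.card (Matrix (Fin m) (Fin n) (ZMod 2) × (Fin m → ZMod 2))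
      = Fintype.card (Matrix (Fin m) (Fin n) (ZMod 2)) * 2 ^ m := by
  simp [Fintype.card_prod, ZMod.card]

lemma xorProb_not (n m : ℕ) (P : Matrix (Fin m) (Fin n) (ZMod 2) × (Fin m → ZMod 2) → Prop) :
    xorProb n m (fun ab => ¬ P ab) = 1 - xorProb n m P := by
  have hpos : (0 : ℝ) < Fintype.card (Matrix (Fin m) (Fin n) (ZMod 2) × (Fin m → ZMod 2)) := by
    exact_mod_cast Fintype.card_pos
  have hsum := card_filter_add_card_filter_not (s := univ) P
  rw [card_univ] at hsum
  rw [xorProb, xorProb, eq_sub_iff_add_eq, ← add_div, div_eq_one_iff_eq hpos.ne', add_comm]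
  norm_cast
  convert hsum

lemma card_filter_cardXorSat_le (n k m : ℕ) :
    #{ab | cardXorSat n k m ab}
      ≤ Fintype.card (Matrix (Fin m) (Fin n) (ZMod 2)) * cardSum n k := by
  set ball : Finset (Fin n → ZMod 2) := {x | hammingNorm x ≤ k}
  calc #{ab | cardXorSat n k m ab}
      ≤ #((univ ×ˢ ball).image fun p : Matrix (Fin m) (Fin n) (ZMod 2) × (Fin n → ZMod 2) =>
          (p.1, p.1.mulVec p.2)) := by
        refine card_le_card fun ab hab => ?_
        obtain ⟨x, hx, hAx⟩ := (mem_filter.1 hab).2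
        exact mem_image.2 ⟨(ab.1, x), by simpa [ball] using hx, by simp [hAx]⟩
    _ ≤ #(univ ×ˢ ball) := card_image_le
    _ = Fintype.card (Matrix (Fin m) (Fin n) (ZMod 2)) * cardSum n k := by
        rw [card_product, card_univ, card_filter_hammingNorm_le]

lemma satProb_le (n k m : ℕ) : satProb n k m ≤ cardSum n k / 2 ^ m := by
  have hpos : (0 : ℝ) < Fintype.card (Matrix (Fin m) (Fin n) (ZMod 2)) := by
    exact_mod_cast Fintype.card_pos
  rw [satProb, xorProb, card_xorSystems, Nat.cast_mul, Nat.cast_pow, Nat.cast_ofNat,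
    div_le_div_iff₀ (by positivity) (by positivity), ← mul_assoc, mul_comm (cardSum n k : ℝ)]
  gcongr
  exact_mod_cast card_filter_cardXorSat_le n k m

lemma one_le_cardSum (n k : ℕ) : 1 ≤ cardSum n k :=
  n.choose_zero_right.symm.le.trans <|
    single_le_sum (f := n.choose) (fun _ _ => Nat.zero_le _) (mem_range.2 k.succ_pos)

lemma satProb_le_two_rpow (n k m : ℕ) :
    satProb n k m ≤ 2 ^ (Real.logb 2 (cardSum n k) - m) := by
  have hpos : (0 : ℝ) < cardSum n k := by exact_mod_cast one_le_cardSum n k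
  rw [Real.rpow_sub two_pos, Real.rpow_logb two_pos (by norm_num) hpos, Real.rpow_natCast]
  exact satProb_le n k m

theorem stmt3_general (s : ℝ) (k : ℕ → ℕ)
    (h : ∃ δ > (0 : ℝ), ∀ᶠ n : ℕ in atTop,
      (1 / n) * Real.logb 2 (cardSum n (k n)) + δ ≤ s) :
    Tendsto (fun n : ℕ => unsatProb n (k n) ⌈s * n⌉₊) atTop (nhds 1) := by
  obtain ⟨δ, hδ, hev⟩ := h
  have hdecay : Tendsto (fun n : ℕ => (2 : ℝ) ^ (-δ * n)) atTop (nhds 0) :=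
    (tendsto_rpow_atBot_of_base_gt_one 2 one_lt_two).comp <|
      (tendsto_const_mul_atBot_of_neg (neg_lt_zero.2 hδ)).2 tendsto_natCast_atTop_atTop
  have hsat : Tendsto (fun n : ℕ => satProb n (k n) ⌈s * n⌉₊) atTop (nhds 0) := by
    refine squeeze_zero' (.of_forall fun n => by unfold satProb xorProb; positivity) ?_ hdecay
    filter_upwards [hev, eventually_gt_atTop 0] with n hn hn0
    refine (satProb_le_two_rpow _ _ _).trans (Real.rpow_le_rpow_of_exponent_le one_le_two ?_)
    have hn0' : (0 : ℝ) < n := by exact_mod_cast hn0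
    rw [one_div_mul_eq_div, div_add' _ _ _ hn0'.ne', div_le_iff₀ hn0'] at hn
    linarith [Nat.le_ceil (s * n)]
  simpa [unsatProb, xorProb_not, satProb] using hsat.const_sub 1

theorem stmt3 (s : ℝ) (hs : 0 ≤ s) (k : ℕ → ℕ) (hk : ∀ n, k n ≤ n)
    (h : ∃ δ > (0 : ℝ), ∀ᶠ n : ℕ in atTop,
      (1 / n) * Real.logb 2 (cardSum n (k n)) + δ ≤ s) :
    Tendsto (fun n : ℕ => unsatProb n (k n) ⌈s * n⌉₊) atTop (nhds 1) :=
  stmt3_general s k h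
end

section
/- Fix a real ρ ∈ (0,1) and define φ(ρ) = H(ρ) if ρ ≤ 1/2 and φ(ρ) = 1 if ρ > 1/2. Let s ≥ 0 be a real number with s < φ(ρ), and set k_n = ⌊ρ·n⌋. Then the probability that the random 1-CARD-XOR formula ψ(n, k_n, ⌈s·n⌉) is satisfiable tends to 1 as n → ∞. -/
open Finset Filter
open scoped Classical

open Matrix Real

/-!
Second moment method. Let `Z` count the solutions of `A x = b` in the Hamming ball `S` of
radius `k`. Each event `A x = b` has probability `2⁻ᵐ`, and for `x ≠ y` the events are
independent because `A ↦ A (x - y)` is onto; so `E Z = |S| 2⁻ᵐ`,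
`E Z² = E Z + |S| (|S| - 1) 4⁻ᵐ`, and Cauchy–Schwarz `(E Z)² ≤ P(Z > 0) E Z²` gives
`P(ψ unsatisfiable) ≤ 2ᵐ / |S|`. It remains to see that `|S|` outgrows `2^(s n)`: for
`ρ ≤ 1/2`, `|S| ≥ C(n, k) ≥ 2^(n H(k/n)) / (n + 1)` by the largest term of the binomial
expansion of `n^n = (k + (n - k))^n`; for `ρ > 1/2`, `S` and its translate by the all-ones vector
cover `(ZMod 2)^n`, so `|S| ≥ 2^(n-1)`.
-/

/-- Second moment bound: reading `c` as the size of the sample space, the events `E x` are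
pairwise independent of probability `p = a / c`, and the union has probability at least
`|S| p / (1 + (|S| - 1) p)`. -/
theorem card_mul_mul_le_card_biUnion_mul {ι Ω : Type*} [DecidableEq Ω] (S : Finset ι)
    (E : ι → Finset Ω) {a c : ℕ} (ha : ∀ x ∈ S, #(E x) = a)
    (hind : ∀ x ∈ S, ∀ y ∈ S, x ≠ y → #(E x ∩ E y) * c = a ^ 2) :
    #S * a * c ≤ #(S.biUnion E) * (c + (#S - 1) * a) := by
  set U := S.biUnion E
  set Z : Ω → ℕ := fun ω => ∑ x ∈ S, if ω ∈ E x then 1 else 0 with hZ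
  have hsub : ∀ x ∈ S, E x ⊆ U := fun x hx => subset_biUnion_of_mem E hx
  have count : ∀ F ⊆ U, ∑ ω ∈ U, (if ω ∈ F then 1 else 0) = #F := fun F hF => by
    rw [sum_boole, Nat.cast_id, filter_mem_eq_inter, inter_eq_right.2 hF]
  have first : ∑ ω ∈ U, Z ω = #S * a := by
    rw [sum_comm, sum_congr rfl fun x hx => (count _ (hsub x hx)).trans (ha x hx), sum_const,
      smul_eq_mul]
  have second : ∑ ω ∈ U, Z ω ^ 2 = ∑ x ∈ S, ∑ y ∈ S, #(E x ∩ E y) := by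
    simp_rw [hZ, sq, sum_mul_sum, ite_zero_mul_ite_zero, mul_one, ← mem_inter]
    rw [sum_comm]
    refine sum_congr rfl fun x hx => ?_
    rw [sum_comm]
    exact sum_congr rfl fun y _ => count _ (inter_subset_left.trans (hsub x hx))
  have diag : ∀ x ∈ S, (∑ y ∈ S, #(E x ∩ E y)) * c = a * c + (#S - 1) * a ^ 2 := by
    intro x hx
    rw [← add_sum_erase S _ hx, inter_self, ha x hx, add_mul, sum_mul,
      sum_congr rfl fun y hy => hind x hx y (mem_of_mem_erase hy) (ne_of_mem_erase hy).symm,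
      sum_const, card_erase_of_mem hx, smul_eq_mul]
  have cauchySchwarz := sq_sum_le_card_mul_sum_sq (s := U) (f := Z)
  rw [first, second] at cauchySchwarz
  have key : (#S * a) * (#S * a * c) ≤ (#S * a) * (#U * (c + (#S - 1) * a)) :=
    calc (#S * a) * (#S * a * c) = (#S * a) ^ 2 * c := by ring
      _ ≤ #U * (∑ x ∈ S, ∑ y ∈ S, #(E x ∩ E y)) * c := Nat.mul_le_mul_right c cauchySchwarz
      _ = #U * ∑ x ∈ S, (a * c + (#S - 1) * a ^ 2) := by
          rw [mul_assoc, sum_mul, sum_congr rfl diag]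
      _ = (#S * a) * (#U * (c + (#S - 1) * a)) := by rw [sum_const, smul_eq_mul]; ring
  rcases Nat.eq_zero_or_pos (#S * a) with h | h
  · rw [h, zero_mul]
    exact Nat.zero_le _
  · exact Nat.le_of_mul_le_mul_left key h

theorem card_filter_apply_fst_eq_snd_and {α β : Type*} [Fintype α] [Fintype β] [DecidableEq β]
    (f : α → β) (P : α → Prop) [DecidablePred P] :
    #{p : α × β | f p.1 = p.2 ∧ P p.1} = #{a | P a} := by
  refine card_bij (fun p _ => p.1) ?_ ?_ ?_
  · intro p hp
    simp only [mem_filter, mem_univ, true_and] at hp ⊢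
    exact hp.2
  · rintro ⟨a, b⟩ hp ⟨a', b'⟩ hp' (rfl : a = a')
    simp only [mem_filter, mem_univ, true_and] at hp hp'
    rw [← hp.1, ← hp'.1]
  · intro a ha
    exact ⟨(a, f a), by simpa using ha, rfl⟩

theorem Matrix.surjective_mulVec_of_ne_zero {K : Type*} [Field K] {m n : ℕ} {v : Fin n → K}
    (hv : v ≠ 0) : Function.Surjective fun A : Matrix (Fin m) (Fin n) K => A *ᵥ v := by
  obtain ⟨j, hj⟩ := Function.ne_iff.1 hv
  intro b
  refine ⟨of fun i => Pi.single j (b i / v j), funext fun i => ?_⟩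
  simp_all [mulVec, single_dotProduct]

theorem card_matrix_fin (R : Type*) [Fintype R] (m n : ℕ) :
    Fintype.card (Matrix (Fin m) (Fin n) R) = Fintype.card R ^ (m * n) := by
  rw [Fintype.card_eq_nat_card]
  simp [Matrix, ← pow_mul, mul_comm]

section MatrixCount

variable {K : Type*} [Field K] [Fintype K] [DecidableEq K] {m n : ℕ}

theorem card_filter_mulVec_eq_zero_mul {v : Fin n → K} (hv : v ≠ 0) :
    #{A : Matrix (Fin m) (Fin n) K | A *ᵥ v = 0} * Fintype.card K ^ m =
      Fintype.card K ^ (m * n) := by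
  let f := mulVec.addMonoidHomLeft (m := Fin m) v
  have hker : Nat.card f.ker = #{A : Matrix (Fin m) (Fin n) K | A *ᵥ v = 0} := by
    rw [← Nat.card_eq_finsetCard]
    exact Nat.card_congr (Equiv.subtypeEquivRight fun A => by simp [f]; rfl)
  have hrange : Nat.card f.range = Fintype.card K ^ m := by
    rw [AddMonoidHom.range_eq_top.2 (surjective_mulVec_of_ne_zero hv)]
    simp
  rw [← hker, ← hrange, ← AddSubgroup.index_ker, AddSubgroup.card_mul_index,
    Nat.card_eq_fintype_card, card_matrix_fin]

theorem card_filter_mulVec_eq (x : Fin n → K) :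
    #{ab : Matrix (Fin m) (Fin n) K × (Fin m → K) | ab.1 *ᵥ x = ab.2} =
      Fintype.card K ^ (m * n) := by
  simpa [card_matrix_fin] using
    card_filter_apply_fst_eq_snd_and (β := Fin m → K) (· *ᵥ x) fun _ => True

theorem card_filter_mulVec_eq_and_mulVec_eq_mul {x y : Fin n → K} (hxy : x ≠ y) :
    #{ab : Matrix (Fin m) (Fin n) K × (Fin m → K) | ab.1 *ᵥ x = ab.2 ∧ ab.1 *ᵥ y = ab.2} *
      Fintype.card K ^ m = Fintype.card K ^ (m * n) := by
  rw [← card_filter_mulVec_eq_zero_mul (sub_ne_zero.2 hxy),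
    ← card_filter_apply_fst_eq_snd_and (β := Fin m → K) (· *ᵥ x)]
  congr 2
  ext ⟨A, b⟩
  simp only [mem_filter, mem_univ, true_and, mulVec_sub, sub_eq_zero]
  constructor
  · rintro ⟨rfl, h⟩
    exact ⟨rfl, h.symm⟩
  · rintro ⟨rfl, h⟩
    exact ⟨rfl, h.symm⟩

end MatrixCount

def hammingBall (n k : ℕ) : Finset (Fin n → ZMod 2) := {x | hammingNorm x ≤ k}

theorem hammingNorm_add_hammingNorm_add_one {n : ℕ} (x : Fin n → ZMod 2) :
    hammingNorm x + hammingNorm (x + 1) = n := by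
  have hflip : ∀ a : ZMod 2, a + 1 ≠ 0 ↔ ¬ a ≠ 0 := by decide
  simp only [hammingNorm, Pi.add_apply, Pi.one_apply, hflip]
  rw [card_filter_add_card_filter_not, card_univ, Fintype.card_fin]

theorem two_pow_le_two_mul_card_hammingBall {n k : ℕ} (h : n ≤ 2 * k + 1) :
    2 ^ n ≤ 2 * #(hammingBall n k) := by
  have hinvol : ∀ x : Fin n → ZMod 2, x + 1 + 1 = x := fun x => by
    ext i
    simp only [Pi.add_apply, Pi.one_apply, add_assoc]
    exact add_eq_left.2 (by decide)
  have hcover : univ ⊆ hammingBall n k ∪ (hammingBall n k).image (· + 1) := by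
    intro x _
    by_cases hx : hammingNorm x ≤ k
    · simp [hammingBall, hx]
    · refine mem_union_right _ (mem_image.2 ⟨x + 1, ?_, hinvol x⟩)
      have := hammingNorm_add_hammingNorm_add_one x
      simp only [hammingBall, mem_filter, mem_univ, true_and]
      omega
  calc 2 ^ n = #(univ : Finset (Fin n → ZMod 2)) := by simp
    _ ≤ #(hammingBall n k ∪ (hammingBall n k).image (· + 1)) := card_le_card hcover
    _ ≤ #(hammingBall n k) + #(hammingBall n k) :=
        (card_union_le _ _).trans (Nat.add_le_add_left card_image_le _)
    _ = 2 * #(hammingBall n k) := by ring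

theorem choose_le_card_hammingBall (n k : ℕ) : n.choose k ≤ #(hammingBall n k) := by
  let indicator : Finset (Fin n) → Fin n → ZMod 2 := fun T i => if i ∈ T then 1 else 0
  have hsupp : ∀ T, ({i | indicator T i ≠ 0} : Finset (Fin n)) = T := fun T => by
    ext i
    by_cases hi : i ∈ T <;> simp [indicator, hi]
  calc n.choose k = #(powersetCard k (univ : Finset (Fin n))) := by simp
    _ ≤ #(hammingBall n k) := by
      refine card_le_card_of_injOn indicator (fun T hT => ?_) (fun T _ U _ hTU => ?_)
      · rw [mem_coe, mem_powersetCard] at hT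
        simp [hammingBall, hammingNorm, hsupp, hT.2]
      · rw [← hsupp T, ← hsupp U, hTU]

theorem filter_cardXorSat_eq_biUnion (n k m : ℕ) :
    univ.filter (cardXorSat n k m) =
      (hammingBall n k).biUnion fun x => {ab | ab.1 *ᵥ x = ab.2} := by
  ext ab
  simp only [mem_filter, mem_univ, true_and, mem_biUnion, hammingBall, cardXorSat]

theorem card_hammingBall_mul_le_card_filter_cardXorSat_mul (n k m : ℕ) :
    #(hammingBall n k) * 2 ^ (m * n) * (2 ^ (m * n) * 2 ^ m) ≤
      #(univ.filter (cardXorSat n k m)) *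
        (2 ^ (m * n) * 2 ^ m + (#(hammingBall n k) - 1) * 2 ^ (m * n)) := by
  rw [filter_cardXorSat_eq_biUnion]
  refine card_mul_mul_le_card_biUnion_mul _ _
    (fun x _ => by simpa using card_filter_mulVec_eq (K := ZMod 2) (m := m) x)
    (fun x _ y _ hxy => ?_)
  have hpair := card_filter_mulVec_eq_and_mulVec_eq_mul (K := ZMod 2) (m := m) hxy
  rw [ZMod.card] at hpair
  rw [← filter_and, mul_comm (2 ^ (m * n)), ← mul_assoc, hpair, sq]

theorem satProb_eq_card_div (n k m : ℕ) :
    satProb n k m = #(univ.filter (cardXorSat n k m)) / ((2 : ℝ) ^ (m * n) * 2 ^ m) := by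
  simp [satProb, xorProb, card_matrix_fin]

theorem satProb_le_one (n k m : ℕ) : satProb n k m ≤ 1 :=
  div_le_one_of_le₀ (by exact_mod_cast card_le_univ _) (Nat.cast_nonneg _)

theorem one_sub_two_pow_div_card_hammingBall_le_satProb (n k m : ℕ) :
    1 - (2 : ℝ) ^ m / #(hammingBall n k) ≤ satProb n k m := by
  have hN : 1 ≤ #(hammingBall n k) := card_pos.2 ⟨0, by simp [hammingBall]⟩
  have hsecond :=
    (Nat.cast_le (α := ℝ)).2 (card_hammingBall_mul_le_card_filter_cardXorSat_mul n k m)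
  push_cast [Nat.cast_sub hN] at hsecond
  rw [satProb_eq_card_div]
  set N : ℝ := (#(hammingBall n k) : ℝ)
  set U : ℝ := (#(univ.filter (cardXorSat n k m)) : ℝ)
  set A : ℝ := 2 ^ (m * n)
  set Q : ℝ := 2 ^ m
  have hN1 : (1 : ℝ) ≤ N := Nat.one_le_cast.2 hN
  have hA : 0 < A := by positivity
  have hQ : 1 ≤ Q := one_le_pow₀ one_le_two
  have hreduced : N * A * Q ≤ U * (Q + N - 1) := by
    refine le_of_mul_le_mul_left ?_ hA
    linear_combination hsecond
  rw [one_sub_div (by positivity), div_le_div_iff₀ (by positivity) (by positivity)]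
  refine le_of_mul_le_mul_right ?_ (by linarith : 0 < Q + N - 1)
  calc (N - Q) * (A * Q) * (Q + N - 1) = ((N - Q) * (Q + N - 1)) * (A * Q) := by ring
    _ ≤ N ^ 2 * (A * Q) := by gcongr; nlinarith
    _ = N * (N * A * Q) := by ring
    _ ≤ N * (U * (Q + N - 1)) := by gcongr
    _ = U * N * (Q + N - 1) := by ring

/-- The `i`-th term of the binomial expansion of `n ^ n = (k + (n - k)) ^ n`. -/
def binomialTerm (n k i : ℕ) : ℕ := n.choose i * k ^ i * (n - k) ^ (n - i)

theorem succ_mul_binomialTerm_succ {n k i : ℕ} (hi : i < n) :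
    (i + 1) * (n - k) * binomialTerm n k (i + 1) = (n - i) * k * binomialTerm n k i := by
  have hexp : n - i = n - (i + 1) + 1 := by omega
  calc (i + 1) * (n - k) * binomialTerm n k (i + 1)
      = n.choose (i + 1) * (i + 1) * (k ^ (i + 1) * (n - k) ^ (n - (i + 1) + 1)) := by
        rw [binomialTerm, pow_succ _ (n - (i + 1))]
        ring
    _ = (n - i) * k * binomialTerm n k i := by
        rw [Nat.choose_succ_right_eq, binomialTerm, ← hexp]
        ring

theorem binomialTerm_le_binomialTerm_self {n k : ℕ} (hkn : k ≤ n) (i : ℕ) :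
    binomialTerm n k i ≤ binomialTerm n k k := by
  rcases le_total i k with hik | hki
  · refine Nat.decreasingInduction (motive := fun i _ => binomialTerm n k i ≤ binomialTerm n k k)
      (fun i hik ih => le_trans ?_ ih) le_rfl hik
    refine Nat.le_of_mul_le_mul_left ?_ (Nat.mul_pos (by omega : 0 < n - i) (by omega : 0 < k))
    calc (n - i) * k * binomialTerm n k i = (i + 1) * (n - k) * binomialTerm n k (i + 1) :=
          (succ_mul_binomialTerm_succ (by omega)).symm
      _ ≤ (n - i) * k * binomialTerm n k (i + 1) := by
          rw [mul_comm (i + 1)]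
          gcongr
          omega
  · induction i, hki using Nat.le_induction with
    | base => exact le_rfl
    | succ i hki ih =>
      refine le_trans ?_ ih
      rcases lt_or_ge i n with hin | hni
      · refine Nat.le_of_mul_le_mul_left ?_
          (Nat.mul_pos (by omega : 0 < i + 1) (by omega : 0 < n - k))
        calc (i + 1) * (n - k) * binomialTerm n k (i + 1) = (n - i) * k * binomialTerm n k i :=
              succ_mul_binomialTerm_succ hin
          _ ≤ (i + 1) * (n - k) * binomialTerm n k i := by
              rw [mul_comm (i + 1)]
              gcongr
              omega
      · simp [binomialTerm, Nat.choose_eq_zero_of_lt (Nat.lt_succ_of_le hni)]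

theorem pow_le_succ_mul_binomialTerm {n k : ℕ} (hkn : k ≤ n) :
    n ^ n ≤ (n + 1) * binomialTerm n k k := by
  calc n ^ n = ∑ i ∈ range (n + 1), binomialTerm n k i := by
        conv_lhs => rw [← Nat.add_sub_cancel' hkn, add_pow, Nat.add_sub_cancel' hkn]
        exact sum_congr rfl fun i _ => by rw [binomialTerm, Nat.cast_id]; ring
    _ ≤ #(range (n + 1)) • binomialTerm n k k :=
        sum_le_card_nsmul _ _ _ fun i _ => binomialTerm_le_binomialTerm_self hkn i
    _ = (n + 1) * binomialTerm n k k := by rw [card_range, smul_eq_mul]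

theorem binEnt_eq_binEntropy_div_log_two : binEnt = fun μ => binEntropy μ / log 2 := by
  ext μ
  simp only [binEnt, binEntropy, logb, log_inv]
  ring

theorem continuous_binEnt : Continuous binEnt := by
  rw [binEnt_eq_binEntropy_div_log_two]
  exact binEntropy_continuous.div_const _

theorem natCast_mul_binEnt_div {n k : ℕ} (hk0 : 0 < k) (hkn : k < n) :
    n * binEnt (k / n) = n * logb 2 n - k * logb 2 k - (n - k : ℕ) * logb 2 (n - k : ℕ) := by
  have hn : (n : ℝ) ≠ 0 := Nat.cast_ne_zero.2 (by omega)
  have hk : (k : ℝ) ≠ 0 := Nat.cast_ne_zero.2 (by omega)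
  have hnk : ((n - k : ℕ) : ℝ) ≠ 0 := Nat.cast_ne_zero.2 (by omega)
  have hsub : 1 - (k : ℝ) / n = (n - k : ℕ) / n := by
    rw [Nat.cast_sub hkn.le]
    field_simp
  rw [binEnt, hsub, logb_div hk hn, logb_div hnk hn, Nat.cast_sub hkn.le]
  field_simp
  ring

theorem two_rpow_mul_binEnt_le_succ_mul_choose {n k : ℕ} (hk0 : 0 < k) (hkn : k < n) :
    (2 : ℝ) ^ (n * binEnt (k / n)) ≤ (n + 1) * n.choose k := by
  have hn : (0 : ℝ) < n := by exact_mod_cast hk0.trans hkn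
  have hk : (0 : ℝ) < k := by exact_mod_cast hk0
  have hc : (0 : ℝ) < n.choose k := by exact_mod_cast Nat.choose_pos hkn.le
  have hnk : (0 : ℝ) < (n - k : ℕ) := by exact_mod_cast Nat.sub_pos_of_lt hkn
  have hnat : (n : ℝ) ^ n ≤ (n + 1) * (n.choose k * k ^ k * ((n - k : ℕ) : ℝ) ^ (n - k)) := by
    exact_mod_cast pow_le_succ_mul_binomialTerm hkn.le
  have hlog := logb_le_logb_of_le one_lt_two (by positivity) hnat
  rw [logb_pow, mul_assoc, logb_mul (by positivity) (by positivity),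
    logb_mul (by positivity) (by positivity), logb_mul (by positivity) (by positivity),
    logb_pow, logb_pow] at hlog
  rw [← le_logb_iff_rpow_le one_lt_two (by positivity), natCast_mul_binEnt_div hk0 hkn,
    logb_mul (by positivity) (by positivity)]
  linarith

theorem two_rpow_le_succ_mul_card_hammingBall_of_le_binEnt {n k : ℕ} {t : ℝ} (hk0 : 0 < k)
    (hkn : k < n) (ht : t ≤ binEnt (k / n)) :
    (2 : ℝ) ^ (t * n) ≤ (n + 1) * #(hammingBall n k) :=
  calc (2 : ℝ) ^ (t * n) ≤ 2 ^ (n * binEnt (k / n)) := by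
        rw [mul_comm]
        exact rpow_le_rpow_of_exponent_le one_le_two (by gcongr)
    _ ≤ (n + 1) * n.choose k := two_rpow_mul_binEnt_le_succ_mul_choose hk0 hkn
    _ ≤ (n + 1) * #(hammingBall n k) := by
        gcongr
        exact_mod_cast choose_le_card_hammingBall n k

theorem two_rpow_le_succ_mul_card_hammingBall_of_lt_two_mul {n k : ℕ} {t : ℝ} (ht : t ≤ 1)
    (hn : 0 < n) (hnk : n < 2 * k) : (2 : ℝ) ^ (t * n) ≤ (n + 1) * #(hammingBall n k) :=
  calc (2 : ℝ) ^ (t * n) ≤ 2 ^ (n : ℝ) :=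
        rpow_le_rpow_of_exponent_le one_le_two (mul_le_of_le_one_left n.cast_nonneg ht)
    _ = 2 ^ n := rpow_natCast 2 n
    _ ≤ 2 * #(hammingBall n k) := by
        exact_mod_cast two_pow_le_two_mul_card_hammingBall (by omega)
    _ ≤ (n + 1) * #(hammingBall n k) := by
        gcongr
        linarith [Nat.one_le_cast (α := ℝ) |>.2 hn]

theorem eventually_two_rpow_le_succ_mul_card_hammingBall {ρ t : ℝ} (hρ0 : 0 < ρ) (hρ1 : ρ < 1)
    (ht : t < if ρ ≤ 1 / 2 then binEnt ρ else 1) :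
    ∀ᶠ n : ℕ in atTop, (2 : ℝ) ^ (t * n) ≤ (n + 1) * #(hammingBall n ⌊ρ * n⌋₊) := by
  have hfrac : Tendsto (fun n : ℕ => (⌊ρ * n⌋₊ : ℝ) / n) atTop (nhds ρ) :=
    (tendsto_nat_floor_mul_div_atTop hρ0.le).comp tendsto_natCast_atTop_atTop
  split_ifs at ht with hρ
  · filter_upwards [hfrac.eventually (lt_mem_nhds hρ0), hfrac.eventually (gt_mem_nhds hρ1),
      ((continuous_binEnt.tendsto ρ).comp hfrac).eventually (lt_mem_nhds ht)] with n hpos hlt hH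
    obtain ⟨hk0, hn0⟩ :=
      (div_pos_iff.1 hpos).resolve_right fun h => (Nat.cast_nonneg _).not_gt h.1
    exact two_rpow_le_succ_mul_card_hammingBall_of_le_binEnt (by exact_mod_cast hk0)
      (by exact_mod_cast (div_lt_one hn0).1 hlt) hH.le
  · filter_upwards [hfrac.eventually (lt_mem_nhds (not_le.1 hρ))] with n hhalf
    have hn : 0 < n := by
      rcases n.eq_zero_or_pos with rfl | hn
      · norm_num at hhalf
      · exact hn
    have hnk : (n : ℝ) < 2 * ⌊ρ * n⌋₊ := by linarith [(lt_div_iff₀ (Nat.cast_pos.2 hn)).1 hhalf]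
    exact two_rpow_le_succ_mul_card_hammingBall_of_lt_two_mul ht.le hn (by exact_mod_cast hnk)

theorem tendsto_two_pow_div_of_two_rpow_le {s t : ℝ} (hst : s < t) {m : ℕ → ℕ} {N : ℕ → ℝ}
    (hm : ∀ n, (m n : ℝ) ≤ s * n + 1)
    (hN : ∀ᶠ n : ℕ in atTop, (2 : ℝ) ^ (t * n) ≤ (n + 1) * N n) :
    Tendsto (fun n => (2 : ℝ) ^ m n / N n) atTop (nhds 0) := by
  set r : ℝ := 2 ^ (t - s)
  have hr : 1 < r := one_lt_rpow one_lt_two (sub_pos.2 hst)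
  have hbound : Tendsto (fun n : ℕ => 2 * ((n ^ 1 + n ^ 0) / r ^ n)) atTop
      (nhds (2 * (0 + 0))) := by
    simp_rw [add_div]
    exact ((tendsto_pow_const_div_const_pow_of_one_lt 1 hr).add
      (tendsto_pow_const_div_const_pow_of_one_lt 0 hr)).const_mul 2
  simp only [pow_one, pow_zero, add_zero, mul_zero] at hbound
  have hNpos : ∀ᶠ n : ℕ in atTop, 0 < N n := hN.mono fun n hn =>
    pos_of_mul_pos_right ((rpow_pos_of_pos two_pos _).trans_le hn) (by positivity)
  refine squeeze_zero' (hNpos.mono fun n hn => by positivity) ?_ hbound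
  filter_upwards [hN, hNpos] with n hn hpos
  have hsplit : (2 : ℝ) ^ (s * n) * r ^ n = 2 ^ (t * n) := by
    rw [← rpow_natCast, ← rpow_mul zero_le_two, ← rpow_add two_pos]
    ring_nf
  have hm2 : (2 : ℝ) ^ m n ≤ 2 * 2 ^ (s * n) := by
    rw [← rpow_natCast, mul_comm, ← rpow_add_one two_ne_zero]
    exact rpow_le_rpow_of_exponent_le one_le_two (hm n)
  calc (2 : ℝ) ^ m n / N n ≤ 2 * 2 ^ (s * n) / N n := by gcongr
    _ ≤ 2 * ((n + 1) / r ^ n) := by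
      rw [mul_div_assoc]
      gcongr 2 * ?_
      rw [div_le_div_iff₀ hpos (by positivity), hsplit]
      exact hn

theorem stmt8 (ρ : ℝ) (hρ0 : 0 < ρ) (hρ1 : ρ < 1) (s : ℝ) (hs0 : 0 ≤ s)
    (hs : s < if ρ ≤ 1 / 2 then binEnt ρ else 1) :
    Tendsto (fun n : ℕ => satProb n ⌊ρ * n⌋₊ ⌈s * n⌉₊) atTop (nhds 1) := by
  obtain ⟨t, hst, ht⟩ := exists_between hs
  have hratio : Tendsto (fun n : ℕ => (2 : ℝ) ^ ⌈s * n⌉₊ / #(hammingBall n ⌊ρ * n⌋₊))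
      atTop (nhds 0) :=
    tendsto_two_pow_div_of_two_rpow_le hst (fun n => (Nat.ceil_lt_add_one (by positivity)).le)
      (eventually_two_rpow_le_succ_mul_card_hammingBall hρ0 hρ1 ht)
  refine tendsto_of_tendsto_of_tendsto_of_le_of_le (by simpa using hratio.const_sub 1)
    tendsto_const_nhds (fun n => ?_) (fun n => satProb_le_one _ _ _)
  exact one_sub_two_pow_div_card_hammingBall_le_satProb _ _ _
end
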